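/- arXiv:2412.10335 — 2 statements merged into one kernel-verified Lean document; each statement's English description precedes it below -/
import Mathlib

section
/- Let G be a finite simple graph and e = {x,y} an edge of G. Then e is a regular edge (no minimal vertex cover contains both x and y) if and only if e satisfies Property P. -/
/-! Pass to complements: a minimal vertex cover is the complement of a maximal independent set,
and every vertex outside a maximal independent set `I` has a neighbour in `I`. If `x, y ∉ I`,
they have neighbours `a, b ∈ I`, and Property P would make `a, b` adjacent. Conversely, if
Property P fails for `a ~ x`, `y ~ b`, then `{a, b}` is independent; any maximal independent
set containing it avoids both `x` and `y`. -/

/-- `X` is a vertex cover of `G`: every edge has an endpoint in `X`. -/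
def SimpleGraph.IsVertexCover' {V : Type*} (G : SimpleGraph V) (X : Set V) : Prop :=
  ∀ ⦃u v : V⦄, G.Adj u v → u ∈ X ∨ v ∈ X

/-- `X` is a minimal vertex cover of `G`. -/
def SimpleGraph.IsMinVertexCover {V : Type*} (G : SimpleGraph V) (X : Set V) : Prop :=
  G.IsVertexCover' X ∧ ∀ Y ⊆ X, G.IsVertexCover' Y → Y = X

/-- An edge `{x,y}` is regular: no minimal vertex cover contains both endpoints. -/
def SimpleGraph.IsRegularEdge {V : Type*} (G : SimpleGraph V) (x y : V) : Prop :=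
  ∀ X : Set V, G.IsMinVertexCover X → ¬(x ∈ X ∧ y ∈ X)

/-- Property P for an edge `{x,y}` of a simple graph. -/
def SimpleGraph.HasPropertyP {V : Type*} (G : SimpleGraph V) (x y : V) : Prop :=
  ∀ a b : V, G.Adj a x → a ≠ y → G.Adj y b → b ≠ x → a ≠ b ∧ G.Adj a b

namespace SimpleGraph

variable {V : Type*} {G : SimpleGraph V}

lemma isMinVertexCover_iff_minimal {X : Set V} :
    G.IsMinVertexCover X ↔ Minimal G.IsVertexCover X :=
  ⟨fun ⟨hX, hmin⟩ => ⟨hX, fun _ hY hYX => (hmin _ hYX hY).ge⟩,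
    fun ⟨hX, hmin⟩ => ⟨hX, fun _ hYX hY => hYX.antisymm (hmin hY hYX)⟩⟩

lemma minimal_isVertexCover_iff_maximal_isIndepSet {X : Set V} :
    Minimal G.IsVertexCover X ↔ Maximal G.IsIndepSet Xᶜ := by
  refine ⟨fun ⟨hX, hmin⟩ => ⟨isIndepSet_compl_iff_isVertexCover.mpr hX, fun J hJ hXJ => ?_⟩,
    fun ⟨hX, hmax⟩ => ⟨isIndepSet_compl_iff_isVertexCover.mp hX, fun Y hY hYX => ?_⟩⟩
  · exact Set.subset_compl_comm.mp
      (hmin (isVertexCover_compl.mpr hJ) (Set.compl_subset_comm.mp hXJ))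
  · exact Set.compl_subset_compl.mp
      (hmax (isIndepSet_compl_iff_isVertexCover.mpr hY) (Set.compl_subset_compl.mpr hYX))

lemma IsIndepSet.exists_maximal_superset {s : Set V} (hs : G.IsIndepSet s) :
    ∃ I, s ⊆ I ∧ Maximal G.IsIndepSet I := by
  refine zorn_subset_nonempty {I | G.IsIndepSet I} (fun c hc hchain _ => ?_) s hs
  exact ⟨⋃₀ c, (Set.pairwise_sUnion hchain.directedOn).mpr hc,
    fun _ => Set.subset_sUnion_of_mem⟩

lemma exists_adj_mem_of_maximal_isIndepSet {I : Set V} (hI : Maximal G.IsIndepSet I)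
    {v : V} (hv : v ∉ I) : ∃ u ∈ I, G.Adj v u := by
  by_contra! hnone
  have hindep : G.IsIndepSet (insert v I) :=
    Set.pairwise_insert.mpr ⟨hI.prop, fun u hu _ => ⟨hnone u hu, fun h => hnone u hu h.symm⟩⟩
  exact hv (hI.2 hindep (Set.subset_insert v I) (Set.mem_insert v I))

lemma isRegularEdge_iff_forall_maximal_isIndepSet {x y : V} :
    G.IsRegularEdge x y ↔ ∀ I, Maximal G.IsIndepSet I → x ∈ I ∨ y ∈ I := by
  simp only [IsRegularEdge, isMinVertexCover_iff_minimal]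
  refine ⟨fun h I hI => ?_, fun h X hX => ?_⟩
  · have := h Iᶜ (minimal_isVertexCover_iff_maximal_isIndepSet.mpr (by rwa [compl_compl]))
    grind
  · have := h Xᶜ (minimal_isVertexCover_iff_maximal_isIndepSet.mp hX)
    grind

end SimpleGraph

open SimpleGraph in
theorem regular_edge_iff_propertyP_general {V : Type*}
    (G : SimpleGraph V) (x y : V) :
    G.IsRegularEdge x y ↔ G.HasPropertyP x y := by
  rw [isRegularEdge_iff_forall_maximal_isIndepSet]
  constructor
  · intro hreg a b hax _ hyb _
    by_contra hab
    have hindep : G.IsIndepSet {a, b} :=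
      Set.pairwise_pair.mpr fun hne => ⟨fun h => hab ⟨hne, h⟩, fun h => hab ⟨hne, h.symm⟩⟩
    obtain ⟨I, hsub, hI⟩ := hindep.exists_maximal_superset
    have haI : a ∈ I := hsub (Set.mem_insert a {b})
    have hbI : b ∈ I := hsub (Set.mem_insert_of_mem a rfl)
    rcases hreg I hI with hxI | hyI
    · exact hI.prop haI hxI hax.ne hax
    · exact hI.prop hyI hbI hyb.ne hyb
  · intro hP I hI
    by_contra! hxy
    obtain ⟨a, haI, hxa⟩ := exists_adj_mem_of_maximal_isIndepSet hI hxy.1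
    obtain ⟨b, hbI, hyb⟩ := exists_adj_mem_of_maximal_isIndepSet hI hxy.2
    obtain ⟨hab, hadj⟩ := hP a b hxa.symm (ne_of_mem_of_not_mem haI hxy.2) hyb
      (ne_of_mem_of_not_mem hbI hxy.1)
    exact hI.prop haI hbI hab hadj

/-- an edge is regular if and only if it has Property P. -/
theorem regular_edge_iff_propertyP {V : Type*} [Fintype V]
    (G : SimpleGraph V) (x y : V) (hxy : G.Adj x y) :
    G.IsRegularEdge x y ↔ G.HasPropertyP x y :=
  regular_edge_iff_propertyP_general G x y
end

section
/- Let G be a finite simple graph in which every vertex of some edge {x,y} satisfies Property P, and suppose Q is a minimal vertex cover of G containing both x and y. Then there exist vertices a ∉ Q adjacent to x and b ∉ Q adjacent to y; consequently (by Property P) {a,b} is an edge of G not covered by Q, a contradiction. Formally: if {x,y} has Property P then no minimal vertex cover of G contains both x and y. -/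
namespace SimpleGraph

variable {V : Type*} {G : SimpleGraph V} {Q : Set V} {v : V}

theorem IsVertexCover'.diff_singleton (hQ : G.IsVertexCover' Q)
    (hN : ∀ w, G.Adj v w → w ∈ Q) : G.IsVertexCover' (Q \ {v}) := by
  intro u w huw
  by_cases hu : u = v
  · subst hu
    exact Or.inr ⟨hN w huw, huw.ne'⟩
  by_cases hw : w = v
  · subst hw
    exact Or.inl ⟨hN u huw.symm, huw.ne⟩
  exact (hQ huw).imp (fun hu' => ⟨hu', hu⟩) (fun hw' => ⟨hw', hw⟩)

theorem IsMinVertexCover.exists_adj_notMem (hQ : G.IsMinVertexCover Q) (hv : v ∈ Q) :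
    ∃ w ∉ Q, G.Adj v w := by
  by_contra! h
  have hN : ∀ w, G.Adj v w → w ∈ Q := fun w hvw => by_contra fun hw => h w hw hvw
  have hQv : Q \ {v} = Q := hQ.2 _ Set.sdiff_subset (hQ.1.diff_singleton hN)
  exact (hQv.symm.subset hv).2 rfl

end SimpleGraph

theorem propertyP_implies_no_min_cover_both_general {V : Type*}
    (G : SimpleGraph V) (x y : V)
    (hP : G.HasPropertyP x y) :
    ∀ Q : Set V, G.IsMinVertexCover Q → ¬(x ∈ Q ∧ y ∈ Q) := by
  rintro Q hQ ⟨hx, hy⟩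
  obtain ⟨a, haQ, hxa⟩ := hQ.exists_adj_notMem hx
  obtain ⟨b, hbQ, hyb⟩ := hQ.exists_adj_notMem hy
  have hab : G.Adj a b :=
    (hP a b hxa.symm (ne_of_mem_of_not_mem hy haQ).symm hyb (ne_of_mem_of_not_mem hx hbQ).symm).2
  exact (hQ.1 hab).elim haQ hbQ

/-- if the edge `{x,y}` has Property P, then no minimal vertex cover of `G`
contains both `x` and `y`. -/
theorem propertyP_implies_no_min_cover_both {V : Type*} [Fintype V]
    (G : SimpleGraph V) (x y : V) (hxy : G.Adj x y)
    (hP : G.HasPropertyP x y) :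
    ∀ Q : Set V, G.IsMinVertexCover Q → ¬(x ∈ Q ∧ y ∈ Q) :=
  propertyP_implies_no_min_cover_both_general G x y hP
end
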